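/- Let n ≥ 3, m = (n-2)/(n+2), β > ρ/(n-2) > 0, α = (2β+ρ)/(1-m), with nβ > α, and let v be a radially symmetric positive solution of ((n-1)/m)Δ(v^m) + αv + βx·∇v = 0 on ℝⁿ such that w(r) = r² v(r)^{1-m} is strictly increasing. Then 0 < r² v(r)^{1-m} ≤ (n-1)(n-2)/ρ for all r > 0. -/

import Mathlib

/-!
Multiplying the equation by `r^(n-1)` shows that the flux
`G(r) = ((n-1)/m) r^(n-1) (v^m)'(r) + β r^n v(r)` satisfies `G' = (nβ - α) r^(n-1) v` and
`G(0⁺) = 0`. Since `w = r² v^(1-m)` is increasing, so is `r^((n+2)/2) v(r) = w^(1/(1-m))`, and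
comparing with this weight gives `G(r) ≤ 2(nβ - α)/(n-2) · r^n v(r)`. Written out, this says
`(n-1) v' ≤ -λ r v^(2-m)` with `λ = (n+2)ρ/(2(n-2))`, while `w' ≥ 0` says `(1-m) r v' ≥ -2v`.
Together they give `λ (1-m) w ≤ 2(n-1)`, which is the bound.
-/

open Real Set Filter Topology

theorem tendsto_rpow_nhdsGT_zero_zero {p : ℝ} (hp : 0 < p) :
    Tendsto (fun s : ℝ => s ^ p) (𝓝[>] 0) (𝓝 0) := by
  have h := (continuousAt_rpow_const 0 p (Or.inr hp.le)).tendsto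
  rw [zero_rpow hp.ne'] at h
  exact h.mono_left nhdsWithin_le_nhds

theorem le_of_tendsto_nhdsGT_of_hasDerivAt_nonpos {f f' : ℝ → ℝ} {a b L : ℝ} (hab : a < b)
    (hf : ∀ x ∈ Ioc a b, HasDerivAt f (f' x) x) (hf' : ∀ x ∈ Ioo a b, f' x ≤ 0)
    (hlim : Tendsto f (𝓝[>] a) (𝓝 L)) : f b ≤ L := by
  have hanti : AntitoneOn f (Ioc a b) :=
    antitoneOn_of_hasDerivWithinAt_nonpos (convex_Ioc a b)
      (fun x hx => (hf x hx).continuousAt.continuousWithinAt)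
      (by simpa using fun x hx => (hf x (Ioo_subset_Ioc_self hx)).hasDerivWithinAt)
      (by simpa using hf')
  refine ge_of_tendsto hlim ?_
  filter_upwards [Ioo_mem_nhdsGT hab] with x hx
  exact hanti (Ioo_subset_Ioc_self hx) (right_mem_Ioc.2 hab) hx.2.le

theorem HasDerivAt.nonneg_of_monotoneOn_Ioi {g : ℝ → ℝ} {g' a x : ℝ} (hd : HasDerivAt g g' x)
    (hg : MonotoneOn g (Ioi a)) (hx : a < x) : 0 ≤ g' := by
  refine hd.hasDerivWithinAt.nonneg_of_monotoneOn ?_ hg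
  simpa using PerfectSpace.univ_preperfect.open_inter isOpen_Ioi x ⟨hx, mem_univ x⟩

theorem ContDiffOn.hasDerivAt_deriv_of_Ici {f : ℝ → ℝ} {a x : ℝ} (hf : ContDiffOn ℝ 2 f (Ici a))
    (hx : a < x) : HasDerivAt (deriv f) (deriv (deriv f) x) x := by
  have h := (hf.mono Ioi_subset_Ici_self).deriv_of_isOpen isOpen_Ioi (m := 1) (by norm_num)
  exact ((h.differentiableOn one_ne_zero).differentiableAt (Ioi_mem_nhds hx)).hasDerivAt

theorem ContDiffOn.tendsto_deriv_nhdsGT {f : ℝ → ℝ} {a : ℝ} (hf : ContDiffOn ℝ 1 f (Ici a)) :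
    Tendsto (deriv f) (𝓝[>] a) (𝓝 (derivWithin f (Ici a) a)) := by
  have h := hf.continuousOn_derivWithin (uniqueDiffOn_Ici a) le_rfl a self_mem_Ici
  refine (h.tendsto.mono_left (nhdsWithin_mono _ Ioi_subset_Ici_self)).congr' ?_
  filter_upwards [self_mem_nhdsWithin] with x hx
  exact derivWithin_of_mem_nhds (Ici_mem_nhds hx)

noncomputable def radialFlux (c m β : ℝ) (v : ℝ → ℝ) (s : ℝ) : ℝ :=
  (c - 1) / m * (s ^ (c - 1) * deriv (fun t => v t ^ m) s) + β * (s ^ c * v s)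

theorem hasDerivAt_radialFlux {c m α β s : ℝ} {v : ℝ → ℝ} (hs : 0 < s)
    (hv : HasDerivAt v (deriv v s) s)
    (hu : HasDerivAt (deriv fun t => v t ^ m) (deriv (deriv fun t => v t ^ m) s) s)
    (hode : (c - 1) / m * (deriv (deriv fun t => v t ^ m) s
        + (c - 1) / s * deriv (fun t => v t ^ m) s) + α * v s + β * s * deriv v s = 0) :
    HasDerivAt (radialFlux c m β v) ((c * β - α) * (s ^ (c - 1) * v s)) s := by
  have hpow (p : ℝ) : HasDerivAt (fun x : ℝ => x ^ p) (p * s ^ (p - 1)) s :=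
    hasDerivAt_rpow_const (Or.inl hs.ne')
  refine ((((hpow (c - 1)).mul hu).const_mul _).add (((hpow c).mul hv).const_mul β)).congr_deriv ?_
  have hc1 : s ^ (c - 1) = s ^ (c - 1 - 1) * s := by
    rw [← rpow_add_one hs.ne']; ring_nf
  have hc : s ^ c = s ^ (c - 1 - 1) * s * s := by
    rw [← hc1, ← rpow_add_one hs.ne']; ring_nf
  have hode' : (c - 1) / m * (s * deriv (deriv fun t => v t ^ m) s
      + (c - 1) * deriv (fun t => v t ^ m) s) + α * s * v s + β * s ^ 2 * deriv v s = 0 := by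
    field_simp at hode ⊢
    linear_combination hode
  rw [hc, hc1]
  linear_combination s ^ (c - 1 - 1) * hode'

theorem tendsto_radialFlux_nhdsGT_zero {c m β a b : ℝ} {v : ℝ → ℝ} (hc : 1 < c)
    (hv : Tendsto v (𝓝[>] 0) (𝓝 a)) (hu : Tendsto (deriv fun t => v t ^ m) (𝓝[>] 0) (𝓝 b)) :
    Tendsto (radialFlux c m β v) (𝓝[>] 0) (𝓝 0) := by
  have h := (((tendsto_rpow_nhdsGT_zero_zero (sub_pos.2 hc)).mul hu).const_mul ((c - 1) / m)).add
    (((tendsto_rpow_nhdsGT_zero_zero (by linarith : (0 : ℝ) < c)).mul hv).const_mul β)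
  simp only [zero_mul, mul_zero, add_zero] at h
  exact h

theorem rpow_mul_le_of_monotoneOn {v : ℝ → ℝ} {m z r : ℝ} (hm : m < 1)
    (hmono : MonotoneOn (fun s => s ^ 2 * v s ^ (1 - m)) (Ioi 0))
    (hvz : 0 ≤ v z) (hvr : 0 ≤ v r) (hz : 0 < z) (hzr : z ≤ r) :
    z ^ (2 / (1 - m)) * v z ≤ r ^ (2 / (1 - m)) * v r := by
  have h1m : 0 < 1 - m := sub_pos.2 hm
  have hroot {s y : ℝ} (hs : 0 ≤ s) (hy : 0 ≤ y) :
      (s ^ 2 * y ^ (1 - m)) ^ (1 / (1 - m)) = s ^ (2 / (1 - m)) * y := by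
    rw [mul_rpow (by positivity) (by positivity), ← rpow_natCast, ← rpow_mul hs,
      ← rpow_mul hy, mul_one_div_cancel h1m.ne', rpow_one, Nat.cast_ofNat, mul_one_div]
  rw [← hroot hz.le hvz, ← hroot (hz.le.trans hzr) hvr]
  exact rpow_le_rpow (by positivity) (hmono hz (hz.trans_le hzr) hzr) (by positivity)

theorem le_of_hasDerivAt_rpow_mul {G v : ℝ → ℝ} {K c q r : ℝ} (hK : 0 ≤ K) (hqc : q < c)
    (hr : 0 < r) (hG : ∀ s ∈ Ioc 0 r, HasDerivAt G (K * (s ^ (c - 1) * v s)) s)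
    (hG0 : Tendsto G (𝓝[>] 0) (𝓝 0)) (hv : ∀ s ∈ Ioc 0 r, s ^ q * v s ≤ r ^ q * v r) :
    G r ≤ K / (c - q) * (r ^ c * v r) := by
  have hcq : 0 < c - q := sub_pos.2 hqc
  set C := K * (r ^ q * v r) / (c - q)
  -- `G - C s^(c-q)` is antitone on `(0, r]` because `s^q v(s) ≤ r^q v(r)` there.
  have hbound : G r - C * r ^ (c - q) ≤ 0 := by
    refine le_of_tendsto_nhdsGT_of_hasDerivAt_nonpos (f := fun s => G s - C * s ^ (c - q)) hr
      (fun s hs => (hG s hs).sub ((hasDerivAt_rpow_const (Or.inl hs.1.ne')).const_mul C))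
      (fun s hs => ?_) ?_
    · have hsplit : s ^ (c - 1) = s ^ (c - q - 1) * s ^ q := by
        rw [← rpow_add hs.1]; ring_nf
      have hmono := mul_le_mul_of_nonneg_left (hv s (Ioo_subset_Ioc_self hs))
        (mul_nonneg hK (rpow_nonneg hs.1.le (c - q - 1)))
      have hC : C * (c - q) = K * (r ^ q * v r) := div_mul_cancel₀ _ hcq.ne'
      rw [hsplit]
      linear_combination hmono - s ^ (c - q - 1) * hC
    · simpa using hG0.sub ((tendsto_rpow_nhdsGT_zero_zero hcq).const_mul C)
  have hsplit : r ^ c = r ^ q * r ^ (c - q) := by rw [← rpow_add hr]; ring_nf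
  rw [hsplit]
  calc G r ≤ C * r ^ (c - q) := by linarith
    _ = _ := by simp only [C]; ring

theorem sq_mul_rpow_le_of_radialFlux_le {v : ℝ → ℝ} {c m β lam r : ℝ} (hc : 1 ≤ c) (hm0 : m ≠ 0)
    (hm : m < 1) (hlam : 0 < lam) (hr : 0 < r) (hvr : 0 < v r) (hv : HasDerivAt v (deriv v r) r)
    (hmono : MonotoneOn (fun s => s ^ 2 * v s ^ (1 - m)) (Ioi 0))
    (hflux : radialFlux c m β v r ≤ (β - lam) * (r ^ c * v r)) :
    r ^ 2 * v r ^ (1 - m) ≤ 2 * (c - 1) / ((1 - m) * lam) := by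
  set V := v r
  set D := deriv v r
  set W := V ^ (1 - m)
  have hW : 0 < W := rpow_pos_of_pos hvr _
  have hw : 0 ≤ 2 * V + (1 - m) * r * D := by
    have h : 0 ≤ 2 * r * W + r ^ 2 * (D * (1 - m) * (W / V)) := by
      convert ((hasDerivAt_pow 2 r).mul (hv.rpow_const (Or.inl hvr.ne'))).nonneg_of_monotoneOn_Ioi
        hmono hr using 1
      rw [rpow_sub_one hvr.ne']
      norm_num
      rfl
    have e : 2 * V + (1 - m) * r * D
        = V / (r * W) * (2 * r * W + r ^ 2 * (D * (1 - m) * (W / V))) := by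
      field_simp
    rw [e]
    positivity
  have hcD : (c - 1) * D ≤ -lam * r * V * W := by
    have hu : deriv (fun t => v t ^ m) r = D * m / W := by
      rw [(hv.rpow_const (Or.inl hvr.ne')).deriv, show m - 1 = -(1 - m) by ring, rpow_neg hvr.le]
      ring
    have hR : 0 < r ^ (c - 1) := rpow_pos_of_pos hr _
    have hrc : r ^ c = r ^ (c - 1) * r := by rw [← rpow_add_one hr.ne']; ring_nf
    have e : radialFlux c m β v r
        = (c - 1) * D / W * r ^ (c - 1) + β * (r ^ (c - 1) * r * V) := by
      rw [radialFlux, hu, hrc]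
      field_simp
      rfl
    rw [e, hrc] at hflux
    have h : (c - 1) * D / W * r ^ (c - 1) ≤ -lam * r * V * r ^ (c - 1) := by linarith
    exact (div_le_iff₀ hW).1 (le_of_mul_le_mul_right h hR)
  rw [le_div_iff₀ (mul_pos (sub_pos.2 hm) hlam)]
  have h1 := mul_le_mul_of_nonneg_left hcD (mul_nonneg (sub_pos.2 hm).le hr.le)
  have h2 := mul_le_mul_of_nonneg_left hw (sub_nonneg.2 hc)
  refine le_of_mul_le_mul_left ?_ hvr
  linarith

theorem radialFlux_le_of_monotoneOn {v : ℝ → ℝ} {c m α β r : ℝ} (hc : 1 < c) (hm : m < 1)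
    (hcm : 2 / (1 - m) < c) (hαβ : α ≤ c * β) (hv : ∀ s, 0 ≤ s → 0 < v s)
    (hreg : ContDiffOn ℝ 2 v (Ici 0))
    (hode : ∀ s, 0 < s → (c - 1) / m * (deriv (deriv fun t => v t ^ m) s
        + (c - 1) / s * deriv (fun t => v t ^ m) s) + α * v s + β * s * deriv v s = 0)
    (hmono : MonotoneOn (fun s => s ^ 2 * v s ^ (1 - m)) (Ioi 0)) (hr : 0 < r) :
    radialFlux c m β v r ≤ (c * β - α) / (c - 2 / (1 - m)) * (r ^ c * v r) := by
  have hu := hreg.rpow_const_of_ne (p := m) fun x hx => (hv x hx).ne'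
  have hvd {s : ℝ} (hs : 0 < s) : HasDerivAt v (deriv v s) s :=
    ((hreg.differentiableOn two_ne_zero).differentiableAt (Ici_mem_nhds hs)).hasDerivAt
  refine le_of_hasDerivAt_rpow_mul (sub_nonneg.2 hαβ) hcm hr
    (fun s hs => hasDerivAt_radialFlux hs.1 (hvd hs.1) (hu.hasDerivAt_deriv_of_Ici hs.1)
      (hode s hs.1))
    (tendsto_radialFlux_nhdsGT_zero hc
      ((hreg.continuousOn 0 self_mem_Ici).tendsto.mono_left (nhdsWithin_mono _ Ioi_subset_Ici_self))
      ((hu.of_le one_le_two).tendsto_deriv_nhdsGT))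
    (fun s hs => rpow_mul_le_of_monotoneOn hm hmono (hv s hs.1.le).le (hv r hr.le).le hs.1 hs.2)

theorem stmt_9_general (n : ℕ) (m α β ρ : ℝ) (hn : 3 ≤ n)
    (hm : m = ((n : ℝ) - 2) / (n + 2)) (hρ : 0 < ρ / ((n : ℝ) - 2))
    (hα : α = (2 * β + ρ) / (1 - m))
    (hnβ : (n : ℝ) * β > α)
    (v : ℝ → ℝ) (hv : ∀ r, 0 ≤ r → 0 < v r)
    (hreg : ContDiffOn ℝ 2 v (Set.Ici 0))
    (hode : ∀ r, 0 < r →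
      ((n : ℝ) - 1) / m *
          (deriv (deriv (fun s => v s ^ m)) r
            + ((n : ℝ) - 1) / r * deriv (fun s => v s ^ m) r)
        + α * v r + β * r * deriv v r = 0)
    (hmono : StrictMonoOn (fun r => r ^ 2 * v r ^ (1 - m)) (Set.Ioi (0 : ℝ))) :
    ∀ r, 0 < r →
      0 < r ^ 2 * v r ^ (1 - m) ∧
      r ^ 2 * v r ^ (1 - m) ≤ ((n : ℝ) - 1) * ((n : ℝ) - 2) / ρ := by
  have hn2 : (0 : ℝ) < n - 2 := by linarith [show (3 : ℝ) ≤ n by exact_mod_cast hn]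
  have hρ0 : 0 < ρ := (div_pos_iff_of_pos_right hn2).1 hρ
  have hm0 : 0 < m := by rw [hm]; positivity
  have h1m : 1 - m = 4 / (n + 2) := by rw [hm]; field_simp; ring
  have hm1 : m < 1 := by linarith [show 0 < 4 / ((n : ℝ) + 2) by positivity]
  have hq : 2 / (1 - m) = ((n : ℝ) + 2) / 2 := by rw [h1m]; field_simp; norm_num
  have hlam : 0 < ((n : ℝ) + 2) * ρ / (2 * (n - 2)) := by positivity
  have hscal : ((n : ℝ) * β - α) / (n - 2 / (1 - m)) = β - ((n : ℝ) + 2) * ρ / (2 * (n - 2)) := by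
    rw [hq, hα, h1m, show (n : ℝ) - (n + 2) / 2 = (n - 2) / 2 by ring]
    field_simp
    ring
  intro r hr
  refine ⟨by have := hv r hr.le; positivity, ?_⟩
  have hflux := radialFlux_le_of_monotoneOn (by linarith) hm1 (by rw [hq]; linarith) hnβ.le hv
    hreg hode hmono.monotoneOn hr
  calc r ^ 2 * v r ^ (1 - m)
      ≤ 2 * (n - 1) / ((1 - m) * (((n : ℝ) + 2) * ρ / (2 * (n - 2)))) :=
        sq_mul_rpow_le_of_radialFlux_le (by linarith) hm0.ne' hm1 hlam hr (hv r hr.le)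
          (((hreg.differentiableOn two_ne_zero).differentiableAt (Ici_mem_nhds hr)).hasDerivAt)
          hmono.monotoneOn (hscal ▸ hflux)
    _ = _ := by rw [h1m]; field_simp; ring

/-- Upper bound r² v^{1-m} ≤ (n-1)(n-2)/ρ for the shrinking Yamabe soliton. -/
theorem stmt_9 (n : ℕ) (m α β ρ : ℝ) (hn : 3 ≤ n)
    (hm : m = ((n : ℝ) - 2) / (n + 2)) (hρ : 0 < ρ / ((n : ℝ) - 2))
    (hβ : β > ρ / ((n : ℝ) - 2)) (hα : α = (2 * β + ρ) / (1 - m))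
    (hnβ : (n : ℝ) * β > α)
    (v : ℝ → ℝ) (hv : ∀ r, 0 ≤ r → 0 < v r)
    (hreg : ContDiffOn ℝ 2 v (Set.Ici 0)) (hv'0 : deriv v 0 = 0)
    (hode : ∀ r, 0 < r →
      ((n : ℝ) - 1) / m *
          (deriv (deriv (fun s => v s ^ m)) r
            + ((n : ℝ) - 1) / r * deriv (fun s => v s ^ m) r)
        + α * v r + β * r * deriv v r = 0)
    (hmono : StrictMonoOn (fun r => r ^ 2 * v r ^ (1 - m)) (Set.Ioi (0 : ℝ))) :
    ∀ r, 0 < r →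
      0 < r ^ 2 * v r ^ (1 - m) ∧
      r ^ 2 * v r ^ (1 - m) ≤ ((n : ℝ) - 1) * ((n : ℝ) - 2) / ρ :=
  stmt_9_general n m α β ρ hn hm hρ hα hnβ v hv hreg hode hmono
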